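/- arXiv:2104.04660 — 3 statements merged into one kernel-verified Lean document; each statement's English description precedes it below -/
import Mathlib

section
/- Let Ω be a nonempty finite type, let Θ be a set of parameters, and for each θ ∈ Θ let μ_θ : Ω → ℝ be a probability mass function (μ_θ(ω) ≥ 0 for all ω and ∑_{ω∈Ω} μ_θ(ω) = 1). Let S : Ω → ℝ be a statistic, and define the maximization (exact unconditional) p-value p(x) = sup_{θ∈Θ} ∑_{ω∈Ω, S(ω) ≥ S(x)} μ_θ(ω). Then p is a valid p-value: for every α ∈ [0,1] and every θ ∈ Θ, ∑_{x∈Ω, p(x) ≤ α} μ_θ(x) ≤ α. -/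
/-!
If the critical region `{p ≤ α}` is nonempty, let `x₀` be a point of it with the least value
of `S`. The whole region then lies in the tail `{S ≥ S x₀}`, whose mass under any null
parameter is at most `p x₀ ≤ α`.
-/

open Finset

theorem sum_filter_le_of_tail_sum_le {Ω : Type*} [Fintype Ω] (w S p : Ω → ℝ)
    (hw : ∀ ω, 0 ≤ w ω) (htail : ∀ x, ∑ ω ∈ univ.filter (fun ω => S x ≤ S ω), w ω ≤ p x)
    {α : ℝ} (hα : 0 ≤ α) :
    ∑ x ∈ univ.filter (fun x => p x ≤ α), w x ≤ α := by
  set A := univ.filter (fun x => p x ≤ α)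
  rcases A.eq_empty_or_nonempty with hA | hA
  · simpa [hA] using hα
  obtain ⟨x₀, hx₀A, hx₀min⟩ := A.exists_min_image S hA
  have hA_tail : A ⊆ univ.filter (fun ω => S x₀ ≤ S ω) := fun x hx => by
    simpa using hx₀min x hx
  calc ∑ x ∈ A, w x
      ≤ ∑ ω ∈ univ.filter (fun ω => S x₀ ≤ S ω), w ω :=
        sum_le_sum_of_subset_of_nonneg hA_tail fun ω _ _ => hw ω
    _ ≤ p x₀ := htail x₀
    _ ≤ α := (mem_filter.mp hx₀A).2

theorem bddAbove_image_sum_of_isProbability {Ω : Type*} [Fintype Ω] {P : Type*} (Θ : Set P)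
    (μ : P → Ω → ℝ) (hμ_nonneg : ∀ θ ∈ Θ, ∀ ω, 0 ≤ μ θ ω)
    (hμ_sum : ∀ θ ∈ Θ, ∑ ω, μ θ ω = 1) (s : Finset Ω) :
    BddAbove ((fun θ => ∑ ω ∈ s, μ θ ω) '' Θ) := by
  refine ⟨1, ?_⟩
  rintro _ ⟨θ, hθ, rfl⟩
  exact (sum_le_univ_sum_of_nonneg (hμ_nonneg θ hθ)).trans_eq (hμ_sum θ hθ)

theorem exact_unconditional_pvalue_valid_general
    {Ω : Type*} [Fintype Ω] {P : Type*} (Θ : Set P)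
    (μ : P → Ω → ℝ)
    (hμ_nonneg : ∀ θ ∈ Θ, ∀ ω : Ω, 0 ≤ μ θ ω)
    (hμ_sum : ∀ θ ∈ Θ, ∑ ω : Ω, μ θ ω = 1)
    (S : Ω → ℝ)
    (p : Ω → ℝ)
    (hp : ∀ x : Ω, p x =
      sSup ((fun θ => ∑ ω ∈ Finset.univ.filter (fun ω => S x ≤ S ω), μ θ ω) '' Θ)) :
    ∀ α ∈ Set.Icc (0 : ℝ) 1, ∀ θ ∈ Θ,
      ∑ x ∈ Finset.univ.filter (fun x => p x ≤ α), μ θ x ≤ α := by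
  intro α hα θ hθ
  refine sum_filter_le_of_tail_sum_le (μ θ) S p (hμ_nonneg θ hθ) (fun x => ?_) hα.1
  rw [hp x]
  exact le_csSup (bddAbove_image_sum_of_isProbability Θ μ hμ_nonneg hμ_sum _)
    (Set.mem_image_of_mem _ hθ)

/-- The maximization (exact unconditional) p-value is a valid p-value. -/
theorem exact_unconditional_pvalue_valid
    {Ω : Type*} [Fintype Ω] [Nonempty Ω] {P : Type*} (Θ : Set P)
    (μ : P → Ω → ℝ)
    (hμ_nonneg : ∀ θ ∈ Θ, ∀ ω : Ω, 0 ≤ μ θ ω)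
    (hμ_sum : ∀ θ ∈ Θ, ∑ ω : Ω, μ θ ω = 1)
    (S : Ω → ℝ)
    (p : Ω → ℝ)
    (hp : ∀ x : Ω, p x =
      sSup ((fun θ => ∑ ω ∈ Finset.univ.filter (fun ω => S x ≤ S ω), μ θ ω) '' Θ)) :
    ∀ α ∈ Set.Icc (0 : ℝ) 1, ∀ θ ∈ Θ,
      ∑ x ∈ Finset.univ.filter (fun x => p x ≤ α), μ θ x ≤ α :=
  exact_unconditional_pvalue_valid_general Θ μ hμ_nonneg hμ_sum S p hp
end

section
/- Let Φ be the standard normal cumulative distribution function, α ∈ (0,2), and q ∈ ℝ with Φ(q) = 1 − α/2. Let f : ℝ → ℝ be strictly monotonically increasing (f(δ) represents the δ-projected Z-score Z_δ(x_T,x_C) at a fixed observed table), let δ₀ ∈ ℝ, and let δ_L^asy ∈ ℝ satisfy f(−δ_L^asy) = q (the asymptotic lower confidence bound). Define the asymptotic p-value p^asy = 1 − Φ(f(δ₀)). Then p^asy ≤ α/2 if and only if δ_L^asy ≥ −δ₀, and p^asy < α/2 if and only if δ_L^asy > −δ₀. -/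
open MeasureTheory ProbabilityTheory Set

theorem isOpenPosMeasure_gaussianReal (μ : ℝ) {v : NNReal} (hv : v ≠ 0) :
    (gaussianReal μ v).IsOpenPosMeasure :=
  (gaussianReal_absolutelyContinuous' μ hv).isOpenPosMeasure

theorem strictMono_measureReal_Iic {X : Type*} [LinearOrder X] [DenselyOrdered X]
    [TopologicalSpace X] [OrderTopology X] [MeasurableSpace X] [OpensMeasurableSpace X]
    (μ : Measure X) [IsFiniteMeasure μ] [μ.IsOpenPosMeasure] :
    StrictMono fun t => μ.real (Iic t) := by
  intro a b hab
  have h_split : μ.real (Iic b) = μ.real (Iic a) + μ.real (Ioc a b) := by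
    rw [← Iic_union_Ioc_eq_Iic hab.le,
      measureReal_union (Iic_disjoint_Ioc le_rfl) measurableSet_Ioc]
  have h_pos : 0 < μ.real (Ioc a b) :=
    ENNReal.toReal_pos
      (((Measure.measure_Ioo_pos μ).2 hab).trans_le (measure_mono Ioo_subset_Ioc_self)).ne'
      (measure_ne_top _ _)
  show μ.real (Iic a) < μ.real (Iic b)
  linarith

theorem asy_pvalue_iff_asy_lower_bound_general
    (α : ℝ) (q : ℝ)
    (f : ℝ → ℝ) (hf : StrictMono f)
    (δ₀ δLasy : ℝ) (hδL : f (-δLasy) = q) :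
    let Φ : ℝ → ℝ := fun t => ((gaussianReal 0 1) (Set.Iic t)).toReal
    Φ q = 1 - α / 2 →
      let pasy : ℝ := 1 - Φ (f δ₀)
      (pasy ≤ α / 2 ↔ -δ₀ ≤ δLasy) ∧ (pasy < α / 2 ↔ -δ₀ < δLasy) := by
  intro Φ hq pasy
  have := isOpenPosMeasure_gaussianReal 0 one_ne_zero
  have hΦf : StrictMono (Φ ∘ f) := (strictMono_measureReal_Iic (gaussianReal 0 1)).comp hf
  constructor
  · rw [sub_le_comm, ← hq, ← hδL, neg_le]
    exact hΦf.le_iff_le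
  · rw [sub_lt_comm, ← hq, ← hδL, neg_lt]
    exact hΦf.lt_iff_lt

/-- Theorem 2: the asymptotic p-value `p^asy = 1 - Φ(f δ₀)`
rejects at level `α/2` iff the asymptotic lower confidence bound `δ_L^asy`
(defined by `f (-δ_L^asy) = 𝔷_{1-α/2}`) exceeds `-δ₀`. -/
theorem asy_pvalue_iff_asy_lower_bound
    (α : ℝ) (hα : α ∈ Set.Ioo (0 : ℝ) 2) (q : ℝ)
    (f : ℝ → ℝ) (hf : StrictMono f)
    (δ₀ δLasy : ℝ) (hδL : f (-δLasy) = q) :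
    let Φ : ℝ → ℝ := fun t => ((gaussianReal 0 1) (Set.Iic t)).toReal
    Φ q = 1 - α / 2 →
      let pasy : ℝ := 1 - Φ (f δ₀)
      (pasy ≤ α / 2 ↔ -δ₀ ≤ δLasy) ∧ (pasy < α / 2 ↔ -δ₀ < δLasy) :=
  asy_pvalue_iff_asy_lower_bound_general α q f hf δ₀ δLasy hδL
end

section
/- Let Φ be the standard normal cumulative distribution function, α ∈ (0,2), and q ∈ ℝ with Φ(q) = 1 − α/2. Let f : ℝ → ℝ be strictly monotonically increasing (f(δ) represents the exact-corrected δ-projected Z-score Z^EC_δ(x_T,x_C) at a fixed observed table), let δ₀ ∈ ℝ, let p ∈ (0,1) (the value of Chan's exact p-value p^exact(x_T,x_C)), and suppose Φ(f(δ₀)) = 1 − p, i.e. f(δ₀) = Φ⁻¹(1 − p). Let δ_L^EC ∈ ℝ satisfy f(−δ_L^EC) = q (the exact-corrected lower confidence bound). Then p ≤ α/2 if and only if δ_L^EC ≥ −δ₀, and p < α/2 if and only if δ_L^EC > −δ₀. -/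
open MeasureTheory ProbabilityTheory Set

lemma strictMono_measureReal_Iic_of_absolutelyContinuous {μ : Measure ℝ} [IsFiniteMeasure μ]
    (hμ : volume ≪ μ) : StrictMono fun t => μ.real (Iic t) := by
  intro a b hab
  have hIoc : 0 < μ.real (Ioc a b) := by
    refine ENNReal.toReal_pos (mt (@hμ _) ?_) (measure_ne_top μ _)
    simp [hab]
  have hsdiff : μ.real (Ioc a b) = μ.real (Iic b) - μ.real (Iic a) := by
    rw [← Iic_sdiff_Iic, measureReal_sdiff (Iic_subset_Iic.mpr hab.le) measurableSet_Iic]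
  linarith

lemma strictMono_gaussianReal_cdf :
    StrictMono fun t => ((gaussianReal 0 1) (Iic t)).toReal :=
  strictMono_measureReal_Iic_of_absolutelyContinuous <|
    gaussianReal_absolutelyContinuous' 0 one_ne_zero

theorem exact_pvalue_iff_EC_lower_bound_general
    (α : ℝ) (q : ℝ)
    (f : ℝ → ℝ) (hf : StrictMono f)
    (δ₀ : ℝ) (p : ℝ)
    (δLEC : ℝ) (hδL : f (-δLEC) = q) :
    let Φ : ℝ → ℝ := fun t => ((gaussianReal 0 1) (Set.Iic t)).toReal
    Φ q = 1 - α / 2 → Φ (f δ₀) = 1 - p →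
      (p ≤ α / 2 ↔ -δ₀ ≤ δLEC) ∧ (p < α / 2 ↔ -δ₀ < δLEC) := by
  intro Φ hq hδ₀
  have hΦf : StrictMono (Φ ∘ f) := strictMono_gaussianReal_cdf.comp hf
  have hΦq : Φ (f (-δLEC)) = 1 - α / 2 := hδL ▸ hq
  constructor
  · calc p ≤ α / 2 ↔ Φ (f (-δLEC)) ≤ Φ (f δ₀) := by rw [hΦq, hδ₀, sub_le_sub_iff_left]
      _ ↔ -δ₀ ≤ δLEC := hΦf.le_iff_le.trans neg_le
  · calc p < α / 2 ↔ Φ (f (-δLEC)) < Φ (f δ₀) := by rw [hΦq, hδ₀, sub_lt_sub_iff_left]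
      _ ↔ -δ₀ < δLEC := hΦf.lt_iff_lt.trans neg_lt

/-- Theorem 4: Chan's exact p-value `p` rejects at level `α/2`
iff the exact-corrected lower confidence bound `δ_L^EC` (defined via the
exact-corrected δ-projected Z-score `f`, with `f (-δ_L^EC) = 𝔷_{1-α/2}` and
`Φ (f δ₀) = 1 - p`) exceeds `-δ₀`. -/
theorem exact_pvalue_iff_EC_lower_bound
    (α : ℝ) (hα : α ∈ Set.Ioo (0 : ℝ) 2) (q : ℝ)
    (f : ℝ → ℝ) (hf : StrictMono f)
    (δ₀ : ℝ) (p : ℝ) (hp : p ∈ Set.Ioo (0 : ℝ) 1)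
    (δLEC : ℝ) (hδL : f (-δLEC) = q) :
    let Φ : ℝ → ℝ := fun t => ((gaussianReal 0 1) (Set.Iic t)).toReal
    Φ q = 1 - α / 2 → Φ (f δ₀) = 1 - p →
      (p ≤ α / 2 ↔ -δ₀ ≤ δLEC) ∧ (p < α / 2 ↔ -δ₀ < δLEC) :=
  exact_pvalue_iff_EC_lower_bound_general α q f hf δ₀ p δLEC hδL
end
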